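/- arXiv:1603.08504 — 4 statements merged into one kernel-verified Lean document; each statement's English description precedes it below -/
import Mathlib

section
/- Let α > 0 and z > 0 be fixed real numbers. Then the function β ↦ 𝔼_{α,β}(z) = Γ(β)·E_{α,β}(z) is log-convex on (0,∞); that is, for all β₁, β₂ > 0 and t ∈ [0,1], 𝔼_{α, tβ₁+(1−t)β₂}(z) ≤ [𝔼_{α,β₁}(z)]^t · [𝔼_{α,β₂}(z)]^{1−t}. -/
/-!
Each term `z ^ n Γ(β) / Γ(β + α n)` of `𝔼_{α,β}(z)` is log-convex in `β`. Indeed, by Euler's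
limit formula `Γ(β) / Γ(β + s)` is the limit of `n ^ (-s) ∏_{j ≤ n} (β + s + j) / (β + j)`, and
each factor is the reciprocal of a positive concave function of `β`. Log-convexity survives
positive multiples, finite products and pointwise limits, and, by Hölder's inequality, convergent
sums.
-/

open Real Set Filter Topology

/-- The Mittag-Leffler function `E_{α,β}(z) = ∑_{n=0}^∞ z^n / Γ(α n + β)`. -/
noncomputable def mittagLeffler (α β z : ℝ) : ℝ :=
  ∑' n : ℕ, z ^ n / Real.Gamma (α * n + β)

/-- The normalized Mittag-Leffler function `𝔼_{α,β}(z) = Γ(β) E_{α,β}(z)`. -/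
noncomputable def mittagLefflerNorm (α β z : ℝ) : ℝ :=
  Real.Gamma β * mittagLeffler α β z

section LogConvex

variable {E ι : Type*} [AddCommMonoid E] [Module ℝ E]

/-- Log-convexity in multiplicative form, so that `f` may vanish (with `0 ^ 0 = 1`). -/
structure LogConvexOn (s : Set E) (f : E → ℝ) : Prop where
  convex : Convex ℝ s
  nonneg : ∀ x ∈ s, 0 ≤ f x
  le_rpow_mul_rpow : ∀ ⦃x⦄, x ∈ s → ∀ ⦃y⦄, y ∈ s → ∀ ⦃a b : ℝ⦄, 0 ≤ a → 0 ≤ b → a + b = 1 →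
    f (a • x + b • y) ≤ f x ^ a * f y ^ b

namespace LogConvexOn

variable {s t : Set E} {f : E → ℝ}

theorem subset (hf : LogConvexOn t f) (hst : s ⊆ t) (hs : Convex ℝ s) : LogConvexOn s f :=
  ⟨hs, fun x hx => hf.nonneg x (hst hx),
    fun _ hx _ hy _ _ ha hb hab => hf.le_rpow_mul_rpow (hst hx) (hst hy) ha hb hab⟩

theorem const_mul (hf : LogConvexOn s f) {c : ℝ} (hc : 0 ≤ c) :
    LogConvexOn s fun x => c * f x := by
  refine ⟨hf.convex, fun x hx => mul_nonneg hc (hf.nonneg x hx), fun x hx y hy a b ha hb hab => ?_⟩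
  have hc_eq : c ^ a * c ^ b = c := by
    rw [← rpow_add' hc (by simp [hab]), hab, rpow_one]
  calc c * f (a • x + b • y) ≤ c ^ a * c ^ b * (f x ^ a * f y ^ b) := by
        rw [hc_eq]; exact mul_le_mul_of_nonneg_left (hf.le_rpow_mul_rpow hx hy ha hb hab) hc
    _ = (c * f x) ^ a * (c * f y) ^ b := by
        rw [mul_rpow hc (hf.nonneg x hx), mul_rpow hc (hf.nonneg y hy)]; ring

theorem prod {F : ι → E → ℝ} (hs : Convex ℝ s) (I : Finset ι)
    (hF : ∀ i ∈ I, LogConvexOn s (F i)) : LogConvexOn s fun x => ∏ i ∈ I, F i x := by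
  refine ⟨hs, fun x hx => Finset.prod_nonneg fun i hi => (hF i hi).nonneg x hx,
    fun x hx y hy a b ha hb hab => ?_⟩
  rw [← finsetProd_rpow _ _ fun i hi => (hF i hi).nonneg x hx,
    ← finsetProd_rpow _ _ fun i hi => (hF i hi).nonneg y hy, ← Finset.prod_mul_distrib]
  exact Finset.prod_le_prod (fun i hi => (hF i hi).nonneg _ (hs hx hy ha hb hab))
    fun i hi => (hF i hi).le_rpow_mul_rpow hx hy ha hb hab

theorem of_tendsto {l : Filter ι} [l.NeBot] {F : ι → E → ℝ} (hs : Convex ℝ s)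
    (hF : ∀ᶠ i in l, LogConvexOn s (F i)) (hlim : ∀ x ∈ s, Tendsto (F · x) l (𝓝 (f x))) :
    LogConvexOn s f := by
  refine ⟨hs, fun x hx => ge_of_tendsto (hlim x hx) (hF.mono fun i hi => hi.nonneg x hx),
    fun x hx y hy a b ha hb hab => ?_⟩
  exact le_of_tendsto_of_tendsto (hlim _ (hs hx hy ha hb hab))
    (((hlim x hx).rpow_const (Or.inr ha)).mul ((hlim y hy).rpow_const (Or.inr hb)))
    (hF.mono fun i hi => hi.le_rpow_mul_rpow hx hy ha hb hab)

theorem tsum {F : ι → E → ℝ} (hs : Convex ℝ s) (hF : ∀ i, LogConvexOn s (F i))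
    (hsum : ∀ x ∈ s, Summable (F · x)) : LogConvexOn s fun x => ∑' i, F i x := by
  refine ⟨hs, fun x hx => tsum_nonneg fun i => (hF i).nonneg x hx,
    fun x hx y hy a b ha hb hab => ?_⟩
  rcases ha.eq_or_lt with rfl | ha'
  · obtain rfl : b = 1 := by linarith
    simp
  rcases hb.eq_or_lt with rfl | hb'
  · obtain rfl : a = 1 := by linarith
    simp
  have hx' (i : ι) : (F i x ^ a) ^ (1 / a) = F i x := by
    rw [← rpow_mul ((hF i).nonneg x hx), mul_one_div_cancel ha'.ne', rpow_one]
  have hy' (i : ι) : (F i y ^ b) ^ (1 / b) = F i y := by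
    rw [← rpow_mul ((hF i).nonneg y hy), mul_one_div_cancel hb'.ne', rpow_one]
  obtain ⟨hsum_mul, hholder⟩ := summable_and_inner_le_Lp_mul_Lq_tsum_of_nonneg
    (holderConjugate_one_div ha' hb' hab) (fun i => rpow_nonneg ((hF i).nonneg x hx) a)
    (fun i => rpow_nonneg ((hF i).nonneg y hy) b)
    ((hsum x hx).congr fun i => (hx' i).symm) ((hsum y hy).congr fun i => (hy' i).symm)
  have hterm (i : ι) : F i (a • x + b • y) ≤ F i x ^ a * F i y ^ b :=
    (hF i).le_rpow_mul_rpow hx hy ha hb hab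
  calc ∑' i, F i (a • x + b • y) ≤ ∑' i, F i x ^ a * F i y ^ b :=
        Summable.tsum_le_tsum hterm
          (hsum_mul.of_nonneg_of_le (fun i => (hF i).nonneg _ (hs hx hy ha hb hab)) hterm) hsum_mul
    _ ≤ _ := hholder
    _ = (∑' i, F i x) ^ a * (∑' i, F i y) ^ b := by simp only [hx', hy', one_div_one_div]

end LogConvexOn

theorem ConcaveOn.logConvexOn_inv {s : Set E} {g : E → ℝ} (hg : ConcaveOn ℝ s g)
    (hpos : ∀ x ∈ s, 0 < g x) : LogConvexOn s fun x => (g x)⁻¹ := by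
  refine ⟨hg.1, fun x hx => inv_nonneg.2 (hpos x hx).le, fun x hx y hy a b ha hb hab => ?_⟩
  have hgx := hpos x hx
  have hgy := hpos y hy
  have hgm_le : g x ^ a * g y ^ b ≤ g (a • x + b • y) :=
    (geom_mean_le_arith_mean2_weighted ha hb hgx.le hgy.le hab).trans (hg.2 hx hy ha hb hab)
  calc (g (a • x + b • y))⁻¹ ≤ (g x ^ a * g y ^ b)⁻¹ := inv_anti₀ (by positivity) hgm_le
    _ = (g x)⁻¹ ^ a * (g y)⁻¹ ^ b := by rw [mul_inv, inv_rpow hgx.le, inv_rpow hgy.le]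

end LogConvex

theorem concaveOn_add_div_add {c d : ℝ} (hdc : d ≤ c) :
    ConcaveOn ℝ (Ioi (-d)) fun x => (x + d) / (x + c) := by
  refine ⟨convex_Ioi _, fun x hx y hy a b ha hb hab => ?_⟩
  have hxy := convex_Ioi (-d) hx hy ha hb hab
  simp only [mem_Ioi, smul_eq_mul] at hx hy hxy ⊢
  obtain rfl : b = 1 - a := by linarith
  have hxc : 0 < x + c := by linarith
  have hyc : 0 < y + c := by linarith
  have hc : 0 < a * x + (1 - a) * y + c := by linarith
  rw [mul_div_assoc', mul_div_assoc', div_add_div _ _ hxc.ne' hyc.ne',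
    div_le_div_iff₀ (mul_pos hxc hyc) hc]
  nlinarith [mul_nonneg (mul_nonneg (mul_nonneg ha hb) (sub_nonneg.2 hdc)) (sq_nonneg (x - y))]

theorem logConvexOn_add_div_add {c d : ℝ} (hdc : d ≤ c) :
    LogConvexOn (Ioi (-d)) fun x => (x + c) / (x + d) := by
  simpa only [inv_div] using (concaveOn_add_div_add hdc).logConvexOn_inv fun x hx =>
    div_pos (neg_lt_iff_pos_add.1 hx) (by linarith [mem_Ioi.1 hx])

theorem Real.GammaSeq_div_GammaSeq_add {x s : ℝ} (hx : 0 < x) (hxs : 0 < x + s) {n : ℕ}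
    (hn : n ≠ 0) :
    GammaSeq x n / GammaSeq (x + s) n =
      (n : ℝ) ^ (-s) * ∏ j ∈ Finset.range (n + 1), (x + (s + j)) / (x + j) := by
  have hn' : (0 : ℝ) < n := by positivity
  have hprod (y : ℝ) (hy : 0 < y) : ∏ j ∈ Finset.range (n + 1), (y + j) ≠ 0 :=
    (Finset.prod_pos fun j _ => by positivity).ne'
  rw [Finset.prod_div_distrib, GammaSeq, GammaSeq, rpow_add hn', rpow_neg hn'.le]
  simp only [← add_assoc]
  field_simp [hprod x hx, hprod (x + s) hxs]

theorem logConvexOn_Gamma_div_Gamma_add {s : ℝ} (hs : 0 ≤ s) :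
    LogConvexOn (Ioi 0) fun x => Gamma x / Gamma (x + s) := by
  have hprod (n : ℕ) : LogConvexOn (Ioi 0)
      fun x => (n : ℝ) ^ (-s) * ∏ j ∈ Finset.range (n + 1), (x + (s + j)) / (x + j) :=
    (LogConvexOn.prod (convex_Ioi 0) _ fun j _ =>
      (logConvexOn_add_div_add (by linarith)).subset (Ioi_subset_Ioi (by simp))
        (convex_Ioi 0)).const_mul (by positivity)
  refine LogConvexOn.of_tendsto (l := atTop) (convex_Ioi 0) (Eventually.of_forall hprod)
    fun x (hx : 0 < x) => ?_
  have hxs : 0 < x + s := by linarith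
  refine ((GammaSeq_tendsto_Gamma x).div (GammaSeq_tendsto_Gamma (x + s))
    (Gamma_pos_of_pos hxs).ne').congr' ?_
  filter_upwards [eventually_ne_atTop 0] with n hn
  exact GammaSeq_div_GammaSeq_add hx hxs hn

theorem Real.Gamma_mul_rpow_le_Gamma_add {x a : ℝ} (hx : 1 < x) (ha : 0 < a) :
    Gamma x * (x - 1) ^ a ≤ Gamma (x + a) := by
  have hx1 : 0 < x - 1 := by linarith
  have hΓx : 0 < Gamma x := Gamma_pos_of_pos (by linarith)
  have hlog_step : log (Gamma x) - log (Gamma (x - 1)) = log (x - 1) := by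
    rw [show Gamma x = (x - 1) * Gamma (x - 1) by simpa using Gamma_add_one hx1.ne',
      log_mul hx1.ne' (Gamma_pos_of_pos hx1).ne', add_sub_cancel_right]
  have hslope := convexOn_log_Gamma.slope_mono_adjacent (mem_Ioi.2 hx1)
    (mem_Ioi.2 (by linarith : 0 < x + a)) (by linarith : x - 1 < x) (by linarith : x < x + a)
  simp only [Function.comp_apply, sub_sub_cancel, add_sub_cancel_left, div_one, hlog_step,
    le_div_iff₀ ha] at hslope
  rw [← log_le_log_iff (by positivity) (Gamma_pos_of_pos (by linarith)),
    log_mul hΓx.ne' (by positivity), log_rpow hx1]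
  linarith

theorem summable_pow_div_Gamma_mul_add {α : ℝ} (hα : 0 < α) (β z : ℝ) :
    Summable fun n : ℕ => z ^ n / Gamma (α * n + β) := by
  have hlin : Tendsto (fun n : ℕ => α * n + β) atTop atTop :=
    tendsto_atTop_add_const_right _ _ (tendsto_natCast_atTop_atTop.const_mul_atTop hα)
  have hpow : Tendsto (fun n : ℕ => (α * n + β - 1) ^ α) atTop atTop :=
    (tendsto_rpow_atTop hα).comp (tendsto_atTop_add_const_right _ _ hlin)
  refine summable_of_ratio_norm_eventually_le (r := 1 / 2) (by norm_num) ?_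
  filter_upwards [hlin.eventually_gt_atTop 1, hpow.eventually_ge_atTop (2 * |z|)] with n hx hpow
  set x := α * n + β
  have hΓx : 0 < Gamma x := Gamma_pos_of_pos (by linarith)
  have hΓxα : 0 < Gamma (x + α) := Gamma_pos_of_pos (by linarith)
  have hratio : Gamma x * (2 * |z|) ≤ Gamma (x + α) :=
    (mul_le_mul_of_nonneg_left hpow hΓx.le).trans (Gamma_mul_rpow_le_Gamma_add hx hα)
  rw [show α * ↑(n + 1) + β = x + α by push_cast; ring, norm_div, norm_div, norm_pow, norm_pow,
    norm_of_nonneg hΓx.le, norm_of_nonneg hΓxα.le, Real.norm_eq_abs, div_le_iff₀ hΓxα]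
  calc |z| ^ (n + 1) = 1 / 2 * (|z| ^ n / Gamma x) * (Gamma x * (2 * |z|)) := by
        field_simp; ring
    _ ≤ 1 / 2 * (|z| ^ n / Gamma x) * Gamma (x + α) :=
        mul_le_mul_of_nonneg_left hratio (by positivity)

theorem mittagLefflerNorm_eq_tsum (α β z : ℝ) :
    mittagLefflerNorm α β z = ∑' n : ℕ, z ^ n * (Gamma β / Gamma (β + α * n)) := by
  rw [mittagLefflerNorm, mittagLeffler, ← tsum_mul_left]
  congr 1 with n
  rw [add_comm β]
  ring

theorem logConvexOn_mittagLefflerNorm {α z : ℝ} (hα : 0 < α) (hz : 0 ≤ z) :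
    LogConvexOn (Ioi 0) fun β => mittagLefflerNorm α β z := by
  simp only [mittagLefflerNorm_eq_tsum]
  refine LogConvexOn.tsum (convex_Ioi 0)
    (fun n => (logConvexOn_Gamma_div_Gamma_add (by positivity)).const_mul (pow_nonneg hz n))
    fun β _ => ((summable_pow_div_Gamma_mul_add hα β z).mul_left (Gamma β)).congr fun n => ?_
  rw [add_comm β]
  ring

/-- For fixed `α > 0` and `z > 0`, the function `β ↦ 𝔼_{α,β}(z)` is log-convex on `(0,∞)`. -/
theorem mittagLefflerNorm_log_convex (α z : ℝ) (hα : 0 < α) (hz : 0 < z) :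
    ∀ β₁ β₂ t : ℝ, 0 < β₁ → 0 < β₂ → 0 ≤ t → t ≤ 1 →
      mittagLefflerNorm α (t * β₁ + (1 - t) * β₂) z ≤
        (mittagLefflerNorm α β₁ z) ^ t * (mittagLefflerNorm α β₂ z) ^ (1 - t) :=
  fun _ _ t hβ₁ hβ₂ ht ht1 => (logConvexOn_mittagLefflerNorm hα hz.le).le_rpow_mul_rpow hβ₁ hβ₂ ht
    (sub_nonneg.2 ht1) (add_sub_cancel t 1)
end

section
/- Let α > 0, β > 0 be real numbers and n ∈ ℕ. Then for all z > 0 the Turán type inequality E^n_{α,β}(z)·E^{n+2}_{α,β}(z) ≤ [E^{n+1}_{α,β}(z)]² holds. -/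
/-- The `n`-th remainder of the Mittag-Leffler series:
`E^n_{α,β}(z) = ∑_{k=n+1}^∞ z^k / Γ(α k + β)`. -/
noncomputable def mittagLefflerRem (α β : ℝ) (n : ℕ) (z : ℝ) : ℝ :=
  ∑' k : ℕ, z ^ (n + 1 + k) / Real.Gamma (α * (n + 1 + k) + β)

/-
Write `u k` for the `k`-th term of the remainder `E^n`, so that with `A = ∑ u k`,
`B = A - u 0` and `C = B - u 1` the claim `A C ≤ B²` is equivalent to `u 0 · C ≤ u 1 · B`.
This holds termwise: `u 0 · u (k + 2) ≤ u 1 · u (k + 1)` is the log-convexity inequality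
`Γ(x + α) Γ(x + (k + 1) α) ≤ Γ(x) Γ(x + (k + 2) α)`. The series converge by the ratio test,
since log-convexity also gives `Γ(x + α) ≥ Γ(x) (x - 1)^α`.
-/

open Real Filter Set

theorem ConvexOn.map_add_add_map_add_le {𝕜 : Type*} [Field 𝕜] [LinearOrder 𝕜]
    [IsStrictOrderedRing 𝕜] {s : Set 𝕜} {f : 𝕜 → 𝕜} (hf : ConvexOn 𝕜 s f) {x d e : 𝕜}
    (hx : x ∈ s) (hxde : x + d + e ∈ s) (hd : 0 ≤ d) (he : 0 ≤ e) :
    f (x + d) + f (x + e) ≤ f x + f (x + d + e) := by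
  rcases hd.eq_or_lt with rfl | hd
  · simp
  rcases he.eq_or_lt with rfl | he
  · simp [add_comm]
  have h₁ := hf.secant_mono_aux1 hx hxde (show x < x + d by linarith) (by linarith)
  have h₂ := hf.secant_mono_aux1 hx hxde (show x < x + e by linarith) (by linarith)
  refine le_of_mul_le_mul_left ?_ (add_pos hd he)
  linear_combination h₁ + h₂

namespace Real

theorem Gamma_add_mul_Gamma_add_le {x d e : ℝ} (hx : 0 < x) (hd : 0 ≤ d) (he : 0 ≤ e) :
    Gamma (x + d) * Gamma (x + e) ≤ Gamma x * Gamma (x + d + e) := by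
  have hΓ₀ := Gamma_pos_of_pos hx
  have hΓd := Gamma_pos_of_pos (show 0 < x + d by linarith)
  have hΓe := Gamma_pos_of_pos (show 0 < x + e by linarith)
  have hΓde := Gamma_pos_of_pos (show 0 < x + d + e by linarith)
  have hlog := convexOn_log_Gamma.map_add_add_map_add_le hx (mem_Ioi.2 (by linarith)) hd he
  simp only [Function.comp_apply] at hlog
  rwa [← log_mul hΓd.ne' hΓe.ne', ← log_mul hΓ₀.ne' hΓde.ne',
    log_le_log_iff (by positivity) (by positivity)] at hlog

/-- Comparing the slope of `log ∘ Γ` on `[x - 1, x]`, which is `log (x - 1)`, with its slope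
on `[x, x + a]`. -/
theorem Gamma_mul_rpow_le_Gamma_add_s2 {x a : ℝ} (hx : 1 < x) (ha : 0 < a) :
    Gamma x * (x - 1) ^ a ≤ Gamma (x + a) := by
  have hx₁ : 0 < x - 1 := by linarith
  have hslope := convexOn_log_Gamma.slope_mono_adjacent (mem_Ioi.2 hx₁)
    (mem_Ioi.2 (show 0 < x + a by linarith)) (sub_one_lt x) (lt_add_of_pos_right x ha)
  have hinc : log (Gamma x) - log (Gamma (x - 1)) = log (x - 1) := by
    rw [sub_eq_iff_eq_add, ← log_mul hx₁.ne' (Gamma_pos_of_pos hx₁).ne', ← Gamma_add_one hx₁.ne',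
      sub_add_cancel]
  simp only [Function.comp_apply, sub_sub_cancel, div_one, add_sub_cancel_left, hinc] at hslope
  rw [le_div_iff₀ ha] at hslope
  have hΓx := Gamma_pos_of_pos (show 0 < x by linarith)
  rw [← exp_log hΓx, ← exp_log (Gamma_pos_of_pos (show 0 < x + a by linarith)),
    rpow_def_of_pos hx₁, ← exp_add, exp_le_exp]
  linarith

theorem tendsto_Gamma_add_div_Gamma_atTop {a : ℝ} (ha : 0 < a) :
    Tendsto (fun x ↦ Gamma (x + a) / Gamma x) atTop atTop := by
  refine tendsto_atTop_mono' _ ?_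
    ((tendsto_rpow_atTop ha).comp (tendsto_atTop_add_const_right _ (-1) tendsto_id))
  filter_upwards [eventually_gt_atTop 1] with x hx
  rw [Function.comp_apply, id, ← sub_eq_add_neg, le_div_iff₀ (Gamma_pos_of_pos (by linarith)),
    mul_comm]
  exact Gamma_mul_rpow_le_Gamma_add_s2 hx ha

end Real

noncomputable def mittagLefflerTerm (α β z : ℝ) (k : ℕ) : ℝ :=
  z ^ k / Gamma (α * k + β)

theorem summable_mittagLefflerTerm {α : ℝ} (hα : 0 < α) (c z : ℝ) :
    Summable (mittagLefflerTerm α c z) := by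
  have hx : Tendsto (fun k : ℕ ↦ α * k + c) atTop atTop :=
    tendsto_atTop_add_const_right _ c
      ((tendsto_natCast_atTop_atTop (R := ℝ)).const_mul_atTop hα)
  refine summable_of_ratio_norm_eventually_le (r := 1 / 2) (by norm_num) ?_
  filter_upwards [hx.eventually (eventually_gt_atTop 0),
    hx.eventually ((tendsto_Gamma_add_div_Gamma_atTop hα).eventually_ge_atTop (2 * |z|))]
    with k hpos hratio
  have hΓ := Gamma_pos_of_pos hpos
  have hΓα := Gamma_pos_of_pos (show 0 < α * k + c + α by linarith)
  rw [le_div_iff₀ hΓ] at hratio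
  unfold mittagLefflerTerm
  push_cast
  rw [show α * (k + 1) + c = α * k + c + α by ring, norm_div, norm_div, norm_pow, norm_pow,
    norm_of_nonneg hΓ.le, norm_of_nonneg hΓα.le, norm_eq_abs, pow_succ, div_le_iff₀ hΓα]
  calc |z| ^ k * |z| = 1 / 2 * (|z| ^ k / Gamma (α * k + c)) * (2 * |z| * Gamma (α * k + c)) := by
        field_simp
    _ ≤ 1 / 2 * (|z| ^ k / Gamma (α * k + c)) * Gamma (α * k + c + α) := by gcongr

theorem tsum_mul_tsum_add_two_le_sq {u : ℕ → ℝ} (hu : Summable u)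
    (h : ∀ k, u 0 * u (k + 2) ≤ u 1 * u (k + 1)) :
    (∑' k, u k) * ∑' k, u (k + 2) ≤ (∑' k, u (k + 1)) ^ 2 := by
  have hu₁ : Summable fun k ↦ u (k + 1) := (summable_nat_add_iff 1).2 hu
  have hu₂ : Summable fun k ↦ u (k + 2) := (summable_nat_add_iff 2).2 hu
  have hA := hu.tsum_eq_zero_add
  have hB := hu₁.tsum_eq_zero_add
  have key : u 0 * ∑' k, u (k + 2) ≤ u 1 * ∑' k, u (k + 1) := by
    rw [← tsum_mul_left, ← tsum_mul_left]
    exact (hu₂.mul_left _).tsum_le_tsum h (hu₁.mul_left _)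
  rw [hA]
  linear_combination key - (∑' k, u (k + 1)) * hB

theorem mittagLefflerTerm_mul_le {α β z : ℝ} (hα : 0 ≤ α) (hβ : 0 < β) (hz : 0 ≤ z) (m k : ℕ) :
    mittagLefflerTerm α β z m * mittagLefflerTerm α β z (m + k + 2) ≤
      mittagLefflerTerm α β z (m + 1) * mittagLefflerTerm α β z (m + k + 1) := by
  have hx : 0 < α * m + β := by positivity
  have h := Gamma_add_mul_Gamma_add_le hx hα (mul_nonneg (k.cast_add_one_pos (α := ℝ)).le hα)
  unfold mittagLefflerTerm
  rw [div_mul_div_comm, div_mul_div_comm, ← pow_add, ← pow_add,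
    show m + (m + k + 2) = m + 1 + (m + k + 1) by omega,
    show α * ↑(m + 1) + β = α * m + β + α by push_cast; ring,
    show α * ↑(m + k + 1) + β = α * m + β + (k + 1) * α by push_cast; ring,
    show α * ↑(m + k + 2) + β = α * m + β + α + (k + 1) * α by push_cast; ring]
  have := Gamma_pos_of_pos hx
  have := Gamma_pos_of_pos (show 0 < α * m + β + α by positivity)
  have := Gamma_pos_of_pos (show 0 < α * m + β + (k + 1) * α by positivity)
  gcongr

/-- Turán type inequality for remainders of the Mittag-Leffler series. -/
theorem mittagLefflerRem_turan (α β : ℝ) (hα : 0 < α) (hβ : 0 < β) (n : ℕ) :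
    ∀ z : ℝ, 0 < z →
      mittagLefflerRem α β n z * mittagLefflerRem α β (n + 2) z ≤
        (mittagLefflerRem α β (n + 1) z) ^ 2 := by
  intro z hz
  have hrem : ∀ j, mittagLefflerRem α β (n + j) z =
      ∑' k, mittagLefflerTerm α β z (n + 1 + (k + j)) := fun j ↦ tsum_congr fun k ↦ by
    rw [mittagLefflerTerm, show n + j + 1 + k = n + 1 + (k + j) by omega]
    push_cast
    ring_nf
  have hrem₀ := hrem 0
  simp only [add_zero] at hrem₀
  rw [hrem₀, hrem 1, hrem 2]
  refine tsum_mul_tsum_add_two_le_sq ?_ fun k ↦ mittagLefflerTerm_mul_le hα.le hβ hz.le (n + 1) k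
  exact ((summable_nat_add_iff (n + 1)).2 (summable_mittagLefflerTerm hα β z)).congr fun k ↦ by
    rw [add_comm]
end

section
/- Let α > 0, β > 0 be real numbers and n ∈ ℕ. Then for all z > 0 the Turán type inequality E_{α, β+(n+1)α}(z) · E_{α, β+(n+3)α}(z) ≤ [E_{α, β+(n+2)α}(z)]² holds. -/
/-!
Put `γ = β + (n + 1) α` and `c m = z ^ m / Γ(α m + γ)`, so that `z ^ k E_{α,γ+kα}(z)` is the
tail `∑ c (m + k)`. Multiplying out by the Cauchy product, the `N`-th coefficients of
`E_{α,γ} · z² E_{α,γ+2α}` and of `(z E_{α,γ+α})²` are antidiagonal sums of `c i c (j + 1)`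
with the last, respectively the first, term removed, so they differ by
`c 1 c (N + 1) - c 0 c (N + 2)`. This is nonnegative because `log Γ` is convex. Convexity of
`log Γ` also gives `Γ(x + α) ≥ (x - 1) ^ α Γ(x)`, whence convergence by the ratio test.
-/

open Real Set Filter

theorem ConvexOn.map_add_add_map_le {f : ℝ → ℝ} {s : Set ℝ} (hf : ConvexOn ℝ s f)
    {x y δ : ℝ} (hx : x ∈ s) (hy : y + δ ∈ s) (hxy : x ≤ y) (hδ : 0 ≤ δ) :
    f (x + δ) + f y ≤ f x + f (y + δ) := by
  rcases (add_le_add hxy hδ).eq_or_lt' with h | h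
  · obtain ⟨rfl, rfl⟩ : x = y ∧ δ = 0 := by constructor <;> linarith
    simp
  have hL : 0 < y + δ - x := by linarith
  have ha : 0 ≤ (y - x) / (y + δ - x) := div_nonneg (sub_nonneg.2 hxy) hL.le
  have hb : 0 ≤ δ / (y + δ - x) := div_nonneg hδ hL.le
  have hsum : (y - x) / (y + δ - x) + δ / (y + δ - x) = 1 := by field_simp; ring
  -- `x + δ` and `y` are the two mirror-image convex combinations of `x` and `y + δ`.
  have h₁ := hf.2 hx hy ha hb hsum
  have h₂ := hf.2 hx hy hb ha (by rw [add_comm, hsum])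
  simp only [smul_eq_mul] at h₁ h₂
  have e₁ : (y - x) / (y + δ - x) * x + δ / (y + δ - x) * (y + δ) = x + δ := by
    field_simp; ring
  have e₂ : δ / (y + δ - x) * x + (y - x) / (y + δ - x) * (y + δ) = y := by
    field_simp; ring
  rw [e₁] at h₁
  rw [e₂] at h₂
  linear_combination h₁ + h₂ + (f x + f (y + δ)) * hsum

theorem Real.Gamma_add_mul_Gamma_le {a b δ : ℝ} (ha : 0 < a) (hab : a ≤ b) (hδ : 0 ≤ δ) :
    Gamma (a + δ) * Gamma b ≤ Gamma a * Gamma (b + δ) := by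
  have hΓ : ∀ {x : ℝ}, a ≤ x → 0 < Gamma x := fun hx => Gamma_pos_of_pos (by linarith)
  have haδ : a ≤ a + δ := le_add_of_nonneg_right hδ
  have hbδ : a ≤ b + δ := by linarith
  have hlog := convexOn_log_Gamma.map_add_add_map_le (mem_Ioi.2 ha)
    (mem_Ioi.2 (by linarith : 0 < b + δ)) hab hδ
  rw [← log_le_log_iff (mul_pos (hΓ haδ) (hΓ hab)) (mul_pos (hΓ le_rfl) (hΓ hbδ)),
    log_mul (hΓ haδ).ne' (hΓ hab).ne', log_mul (hΓ le_rfl).ne' (hΓ hbδ).ne']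
  exact hlog

theorem Real.rpow_mul_Gamma_le_Gamma_add {x α : ℝ} (hx : 1 < x) (hα : 0 < α) :
    (x - 1) ^ α * Gamma x ≤ Gamma (x + α) := by
  have hx₁ : 0 < x - 1 := by linarith
  have hΓx : 0 < Gamma x := Gamma_pos_of_pos (by linarith)
  have hrec : log (Gamma x) = log (x - 1) + log (Gamma (x - 1)) := by
    rw [← log_mul hx₁.ne' (Gamma_pos_of_pos hx₁).ne', ← Gamma_add_one hx₁.ne', sub_add_cancel]
  -- The slope of `log ∘ Gamma` on `[x - 1, x]` is `log (x - 1)`.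
  have hslope := convexOn_log_Gamma.slope_mono_adjacent (mem_Ioi.2 hx₁)
    (mem_Ioi.2 (by linarith : 0 < x + α)) (by linarith : x - 1 < x) (by linarith : x < x + α)
  simp only [Function.comp_apply, sub_sub_cancel, div_one, add_sub_cancel_left] at hslope
  rw [hrec, add_sub_cancel_right, le_div_iff₀ hα] at hslope
  rw [← log_le_log_iff (by positivity) (Gamma_pos_of_pos (by linarith)),
    log_mul (by positivity) hΓx.ne', log_rpow hx₁]
  linarith

theorem summable_pow_div_Gamma {α : ℝ} (hα : 0 < α) (γ z : ℝ) :
    Summable fun m : ℕ => z ^ m / Gamma (α * m + γ) := by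
  have hlin : Tendsto (fun m : ℕ => α * m + γ) atTop atTop :=
    tendsto_atTop_add_const_right _ γ (tendsto_natCast_atTop_atTop.const_mul_atTop hα)
  have hgrowth : Tendsto (fun m : ℕ => (α * m + γ - 1) ^ α) atTop atTop :=
    (tendsto_rpow_atTop hα).comp (tendsto_atTop_add_const_right _ (-1) hlin)
  refine summable_of_ratio_norm_eventually_le (r := 1 / 2) (by norm_num) ?_
  filter_upwards [hlin.eventually_gt_atTop 1, hgrowth.eventually_ge_atTop (2 * |z|)]
    with m hx hz
  have hΓ : 0 < Gamma (α * m + γ) := Gamma_pos_of_pos (by linarith)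
  have hΓα : 0 < Gamma (α * m + γ + α) := Gamma_pos_of_pos (by linarith)
  have hsucc : α * ((m + 1 : ℕ) : ℝ) + γ = α * m + γ + α := by push_cast; ring
  simp only [norm_div, norm_pow, Real.norm_eq_abs, hsucc, abs_of_pos hΓ, abs_of_pos hΓα]
  calc |z| ^ (m + 1) / Gamma (α * m + γ + α)
      ≤ |z| ^ (m + 1) / ((α * m + γ - 1) ^ α * Gamma (α * m + γ)) := by
        gcongr
        exact rpow_mul_Gamma_le_Gamma_add hx hα
    _ = |z| / (α * m + γ - 1) ^ α * (|z| ^ m / Gamma (α * m + γ)) := by ring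
    _ ≤ 1 / 2 * (|z| ^ m / Gamma (α * m + γ)) := by
        refine mul_le_mul_of_nonneg_right ?_ (by positivity)
        rw [div_le_iff₀ (rpow_pos_of_pos (by linarith) α)]
        linarith

theorem tsum_mul_tsum_add_two_le_sq_s3 {c : ℕ → ℝ} (hc : Summable c)
    (hc_lc : ∀ N, c 0 * c (N + 2) ≤ c 1 * c (N + 1)) :
    (∑' m, c m) * ∑' m, c (m + 2) ≤ (∑' m, c (m + 1)) ^ 2 := by
  have hnorm : Summable fun m => ‖c m‖ := by simpa only [Real.norm_eq_abs] using hc.abs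
  have hshift : ∀ k, Summable fun m => ‖c (m + k)‖ := fun k => (summable_nat_add_iff k).2 hnorm
  rw [sq, tsum_mul_tsum_eq_tsum_sum_antidiagonal_of_summable_norm hnorm (hshift 2),
    tsum_mul_tsum_eq_tsum_sum_antidiagonal_of_summable_norm (hshift 1) (hshift 1)]
  refine Summable.tsum_le_tsum (fun N => ?_)
    (summable_norm_sum_mul_antidiagonal_of_summable_norm hnorm (hshift 2)).of_norm
    (summable_norm_sum_mul_antidiagonal_of_summable_norm (hshift 1) (hshift 1)).of_norm
  have hfirst := Finset.Nat.sum_antidiagonal_succ (n := N) (f := fun p => c p.1 * c (p.2 + 1))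
  have hlast := Finset.Nat.sum_antidiagonal_succ' (n := N) (f := fun p => c p.1 * c (p.2 + 1))
  simp only [zero_add] at hfirst hlast
  linarith [hc_lc N]

theorem tsum_pow_div_Gamma_add_eq_pow_mul_mittagLeffler (α γ z : ℝ) (k : ℕ) :
    ∑' m : ℕ, z ^ (m + k) / Gamma (α * (m + k : ℕ) + γ) =
      z ^ k * mittagLeffler α (γ + k * α) z := by
  rw [mittagLeffler, ← tsum_mul_left]
  congr 1 with m
  rw [pow_add, Nat.cast_add, show α * (m + k) + γ = α * m + (γ + k * α) by ring]
  ring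

theorem mittagLeffler_mul_mittagLeffler_add_two_mul_le_sq {α γ z : ℝ} (hα : 0 < α)
    (hγ : 0 < γ) (hz : 0 < z) :
    mittagLeffler α γ z * mittagLeffler α (γ + 2 * α) z ≤ mittagLeffler α (γ + α) z ^ 2 := by
  set c : ℕ → ℝ := fun m => z ^ m / Gamma (α * m + γ)
  have hc_lc : ∀ N, c 0 * c (N + 2) ≤ c 1 * c (N + 1) := by
    intro N
    have hΓ := Gamma_add_mul_Gamma_le hγ (b := α * (N + 1) + γ)
      (le_add_of_nonneg_left (by positivity)) hα.le
    simp only [c, div_mul_div_comm, ← pow_add, Nat.cast_zero, Nat.cast_one, Nat.cast_add,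
      Nat.cast_ofNat, mul_zero, mul_one, zero_add]
    rw [show 1 + (N + 1) = N + 2 by ring, show α * (N + 2) + γ = α * (N + 1) + γ + α by ring,
      add_comm α γ]
    exact div_le_div_of_nonneg_left (by positivity)
      (mul_pos (Gamma_pos_of_pos (by positivity)) (Gamma_pos_of_pos (by positivity))) hΓ
  have key := tsum_mul_tsum_add_two_le_sq_s3 (summable_pow_div_Gamma hα γ z) hc_lc
  rw [tsum_pow_div_Gamma_add_eq_pow_mul_mittagLeffler α γ z 1,
    tsum_pow_div_Gamma_add_eq_pow_mul_mittagLeffler α γ z 2] at key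
  simp only [Nat.cast_one, Nat.cast_ofNat, one_mul, pow_one] at key
  refine le_of_mul_le_mul_left ?_ (pow_pos hz 2)
  calc z ^ 2 * (mittagLeffler α γ z * mittagLeffler α (γ + 2 * α) z)
      = mittagLeffler α γ z * (z ^ 2 * mittagLeffler α (γ + 2 * α) z) := by ring
    _ ≤ (z * mittagLeffler α (γ + α) z) ^ 2 := key
    _ = z ^ 2 * mittagLeffler α (γ + α) z ^ 2 := by ring

/-- Turán type inequality for shifted Mittag-Leffler functions. -/
theorem mittagLeffler_turan_shift (α β : ℝ) (hα : 0 < α) (hβ : 0 < β) (n : ℕ) :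
    ∀ z : ℝ, 0 < z →
      mittagLeffler α (β + (n + 1) * α) z * mittagLeffler α (β + (n + 3) * α) z ≤
        (mittagLeffler α (β + (n + 2) * α) z) ^ 2 := by
  intro z hz
  have h := mittagLeffler_mul_mittagLeffler_add_two_mul_le_sq hα
    (by positivity : 0 < β + (n + 1) * α) hz
  rwa [show β + (n + 1) * α + α = β + (n + 2) * α by ring,
    show β + (n + 1) * α + 2 * α = β + (n + 3) * α by ring] at h
end

section
/- Let α > 0, 0 < γ ≤ 1 and β > 0 be real numbers such that the Gamma function Γ is monotone increasing on the interval [β+1, ∞) (equivalently, β + 1 is at least the abscissa x* ≈ 1.4616 of the minimum of Γ on (0,∞)). Then for all z ∈ [0,1) the Turán type inequality E^{γ,1}_{α,β}(z)·E^{γ,1}_{α,β+2}(z) ≥ [E^{γ,1}_{α,β+1}(z)]² − 1/(Γ(β+1)·Γ(β+2)·(1−z)²) holds. -/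
/-!
With `x n = α n + β` and `u n = (γ)_n zⁿ / (n! Γ(x n + 1))`, the three series have terms
`x n * u n`, `u n` and `u n / (x n + 1)`. Expanding both sides as double series over `(i, j)` and
symmetrising under `(i, j) ↦ (j, i)`, it suffices that
`2 uᵢ uⱼ ≤ (xᵢ / (xⱼ + 1) + xⱼ / (xᵢ + 1)) uᵢ uⱼ + 2 zⁱ⁺ʲ / ((β + 1) Γ(β + 1)²)`.
The bracket is at least `2β / (β + 1)` because `xᵢ, xⱼ ≥ β`, and `u n ≤ zⁿ / Γ(β + 1)` because
`(γ)_n ≤ n!` for `γ ≤ 1` and `Γ` increases on `[β + 1, ∞)`. Summing the defect terms gives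
`(1 - z)⁻² / ((β + 1) Γ(β + 1)²) = 1 / (Γ(β + 1) Γ(β + 2) (1 - z)²)`.
-/

/-- The generalized Mittag-Leffler function
`E^{γ,q}_{α,β}(z) = ∑_{n=0}^∞ (γ)_{qn} z^n / (n! Γ(α n + β))`,
where `(γ)_s = Γ(γ+s)/Γ(γ)` is the Pochhammer symbol. -/
noncomputable def genMittagLeffler (α β γ q z : ℝ) : ℝ :=
  ∑' n : ℕ, (Real.Gamma (γ + q * n) / Real.Gamma γ) * z ^ n /
    (n.factorial * Real.Gamma (α * n + β))

open Real

theorem tsum_le_tsum_of_add_comp_swap_le {ι : Type*} {F G : ι × ι → ℝ}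
    (hF : Summable F) (hG : Summable G) (h : ∀ p, F p + F p.swap ≤ G p + G p.swap) :
    ∑' p, F p ≤ ∑' p, G p := by
  have hswap {H : ι × ι → ℝ} (hH : Summable H) : Summable fun p : ι × ι => H p.swap :=
    (Equiv.prodComm ι ι).summable_iff.mpr hH
  have hsum {H : ι × ι → ℝ} (hH : Summable H) :
      ∑' p, (H p + H p.swap) = 2 * ∑' p, H p := by
    have := (Equiv.prodComm ι ι).tsum_eq H
    simp only [Equiv.prodComm_apply] at this
    rw [hH.tsum_add (hswap hH), this, two_mul]
  have := (hF.add (hswap hF)).tsum_le_tsum h (hG.add (hswap hG))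
  rw [hsum hF, hsum hG] at this
  linarith

theorem sq_tsum_le_of_pairwise {ι : Type*} {u v w g h : ι → ℝ}
    (hu : Summable u) (hv : Summable v) (hw : Summable w) (hg : Summable g) (hh : Summable h)
    (hpair : ∀ i j, 2 * (u i * u j) ≤ v i * w j + v j * w i + (g i * h j + g j * h i)) :
    (∑' i, u i) ^ 2 ≤ (∑' i, v i) * (∑' i, w i) + (∑' i, g i) * (∑' i, h i) := by
  have hprod {a b : ι → ℝ} (ha : Summable a) (hb : Summable b) :
      Summable fun p : ι × ι => a p.1 * b p.2 :=
    summable_mul_of_summable_norm ha.norm hb.norm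
  rw [sq, tsum_mul_tsum_of_summable_norm hu.norm hu.norm,
    tsum_mul_tsum_of_summable_norm hv.norm hw.norm,
    tsum_mul_tsum_of_summable_norm hg.norm hh.norm, ← (hprod hv hw).tsum_add (hprod hg hh)]
  refine tsum_le_tsum_of_add_comp_swap_le (hprod hu hu) ((hprod hv hw).add (hprod hg hh)) ?_
  rintro ⟨i, j⟩
  have := hpair i j
  simp only [Prod.swap]
  linarith [mul_comm (u i) (u j)]

theorem two_mul_sub_le_div_add_one {β a b : ℝ} (hβ : 0 < β) (ha : β ≤ a) (hb : β ≤ b) :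
    2 - (a / (b + 1) + b / (a + 1)) ≤ 2 / (β + 1) := by
  have ha0 : 0 < a := hβ.trans_le ha
  have hb0 : 0 < b := hβ.trans_le hb
  rw [sub_le_iff_le_add, div_add_div _ _ (by positivity) (by positivity),
    div_add_div _ _ (by positivity) (by positivity), le_div_iff₀ (by positivity)]
  nlinarith [sq_nonneg (a - b), mul_nonneg (sub_nonneg.2 ha) (sub_nonneg.2 hb),
    mul_nonneg hβ.le (sq_nonneg (a - b))]

theorem Gamma_add_nat_le_factorial_mul_Gamma {γ : ℝ} (hγ₀ : 0 < γ) (hγ₁ : γ ≤ 1) (n : ℕ) :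
    Gamma (γ + n) ≤ n.factorial * Gamma γ := by
  induction n with
  | zero => simp
  | succ n ih =>
    have hpos : 0 < γ + n := by positivity
    rw [Nat.cast_succ, ← add_assoc, Gamma_add_one hpos.ne', Nat.factorial_succ, Nat.cast_mul,
      Nat.cast_succ, mul_assoc]
    exact mul_le_mul (by linarith) ih (Gamma_pos_of_pos hpos).le (by positivity)

theorem summable_mul_of_le_geometric {x u : ℕ → ℝ} {a b K z : ℝ} (hz₀ : 0 ≤ z) (hz₁ : z < 1)
    (hx₀ : ∀ n, 0 ≤ x n) (hx : ∀ n, x n ≤ a * n + b) (hu₀ : ∀ n, 0 ≤ u n)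
    (hu : ∀ n, u n ≤ z ^ n / K) : Summable fun n => x n * u n := by
  have hgeom := summable_geometric_of_lt_one hz₀ hz₁
  have hngeom := summable_pow_mul_geometric_of_norm_lt_one 1 (by rwa [norm_of_nonneg hz₀])
  refine .of_nonneg_of_le (fun n => mul_nonneg (hx₀ n) (hu₀ n))
    (fun n => mul_le_mul (hx n) (hu n) (hu₀ n) ((hx₀ n).trans (hx n))) ?_
  refine (((hngeom.mul_left a).add (hgeom.mul_left b)).div_const K).congr fun n => ?_
  simp only [pow_one]
  ring

theorem turan_defect_of_le_geometric {x u : ℕ → ℝ} {β K z : ℝ} (hβ : 0 < β) (hK : 0 < K)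
    (hz₀ : 0 ≤ z) (hz₁ : z < 1) (hx : ∀ n, β ≤ x n) (hu₀ : ∀ n, 0 ≤ u n)
    (hu : ∀ n, u n ≤ z ^ n / K) (hxu : Summable fun n => x n * u n) :
    (∑' n, u n) ^ 2 ≤ (∑' n, x n * u n) * (∑' n, u n / (x n + 1)) +
      1 / ((β + 1) * K ^ 2 * (1 - z) ^ 2) := by
  have hx₁ (n : ℕ) : 1 ≤ x n + 1 := by linarith [hx n]
  have hgeom := summable_geometric_of_lt_one hz₀ hz₁
  have hsu : Summable u := .of_nonneg_of_le hu₀ hu (hgeom.div_const K)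
  have hsw : Summable fun n => u n / (x n + 1) :=
    .of_nonneg_of_le (fun n => div_nonneg (hu₀ n) (by linarith [hx₁ n]))
      (fun n => div_le_self (hu₀ n) (hx₁ n)) hsu
  have hdefect : (∑' n, z ^ n) * (∑' n, z ^ n / ((β + 1) * K ^ 2)) =
      1 / ((β + 1) * K ^ 2 * (1 - z) ^ 2) := by
    rw [tsum_div_const, tsum_geometric_of_lt_one hz₀ hz₁]
    field_simp
  rw [← hdefect]
  refine sq_tsum_le_of_pairwise hsu hxu hsw hgeom (hgeom.div_const _) fun i j => ?_
  have hprod : u i * u j ≤ z ^ i * z ^ j / K ^ 2 := by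
    rw [sq, mul_div_mul_comm]
    exact mul_le_mul (hu i) (hu j) (hu₀ j) (by positivity)
  have hS := two_mul_sub_le_div_add_one hβ (hx i) (hx j)
  calc 2 * (u i * u j)
      = (x i / (x j + 1) + x j / (x i + 1)) * (u i * u j) +
          (2 - (x i / (x j + 1) + x j / (x i + 1))) * (u i * u j) := by ring
    _ ≤ (x i / (x j + 1) + x j / (x i + 1)) * (u i * u j) +
          2 / (β + 1) * (z ^ i * z ^ j / K ^ 2) := by
      gcongr ?_ + ?_
      · exact le_rfl
      · exact mul_le_mul hS hprod (mul_nonneg (hu₀ i) (hu₀ j)) (by positivity)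
    _ = x i * u i * (u j / (x j + 1)) + x j * u j * (u i / (x i + 1)) +
          (z ^ i * (z ^ j / ((β + 1) * K ^ 2)) + z ^ j * (z ^ i / ((β + 1) * K ^ 2))) := by
      field_simp
      ring

noncomputable def mittagLefflerCoeff (γ z : ℝ) (n : ℕ) : ℝ :=
  Gamma (γ + n) / Gamma γ * z ^ n / n.factorial

theorem genMittagLeffler_one_eq (α β γ z : ℝ) :
    genMittagLeffler α β γ 1 z = ∑' n : ℕ, mittagLefflerCoeff γ z n / Gamma (α * n + β) := by
  unfold genMittagLeffler mittagLefflerCoeff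
  simp only [one_mul, div_div]

theorem mittagLefflerCoeff_nonneg {γ z : ℝ} (hγ : 0 < γ) (hz : 0 ≤ z) (n : ℕ) :
    0 ≤ mittagLefflerCoeff γ z n := by
  unfold mittagLefflerCoeff
  have := Gamma_pos_of_pos hγ
  have : 0 < Gamma (γ + n) := Gamma_pos_of_pos (by positivity)
  positivity

theorem mittagLefflerCoeff_le_pow {γ z : ℝ} (hγ₀ : 0 < γ) (hγ₁ : γ ≤ 1) (hz : 0 ≤ z) (n : ℕ) :
    mittagLefflerCoeff γ z n ≤ z ^ n := by
  have hratio : Gamma (γ + n) / Gamma γ ≤ n.factorial :=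
    (div_le_iff₀ (Gamma_pos_of_pos hγ₀)).2 (Gamma_add_nat_le_factorial_mul_Gamma hγ₀ hγ₁ n)
  calc mittagLefflerCoeff γ z n ≤ n.factorial * z ^ n / n.factorial := by
        unfold mittagLefflerCoeff; gcongr
    _ = z ^ n := by field_simp

theorem genMittagLeffler_one_eq_tsum_mul {α β : ℝ} (hα : 0 ≤ α) (hβ : 0 < β) (γ z : ℝ) :
    genMittagLeffler α β γ 1 z =
      ∑' n : ℕ, (α * n + β) * (mittagLefflerCoeff γ z n / Gamma (α * n + β + 1)) := by
  rw [genMittagLeffler_one_eq]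
  refine tsum_congr fun n => ?_
  have hx : 0 < α * n + β := by positivity
  rw [Gamma_add_one hx.ne']
  field_simp

theorem genMittagLeffler_one_add_one_eq (α β γ z : ℝ) :
    genMittagLeffler α (β + 1) γ 1 z =
      ∑' n : ℕ, mittagLefflerCoeff γ z n / Gamma (α * n + β + 1) := by
  simp only [genMittagLeffler_one_eq, add_assoc]

theorem genMittagLeffler_one_add_two_eq {α β : ℝ} (hα : 0 ≤ α) (hβ : 0 < β) (γ z : ℝ) :
    genMittagLeffler α (β + 2) γ 1 z =
      ∑' n : ℕ, mittagLefflerCoeff γ z n / Gamma (α * n + β + 1) / (α * n + β + 1) := by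
  rw [genMittagLeffler_one_eq]
  refine tsum_congr fun n => ?_
  have hx : 0 < α * n + β + 1 := by positivity
  rw [show α * n + (β + 2) = α * n + β + 1 + 1 by ring, Gamma_add_one hx.ne', div_div, mul_comm]

/-- Turán type inequality with a defect term for the generalized
Mittag-Leffler function with `q = 1`. -/
theorem genMittagLeffler_turan_defect (α β γ : ℝ) (hα : 0 < α) (hβ : 0 < β)
    (hγ₀ : 0 < γ) (hγ₁ : γ ≤ 1)
    (hΓ : MonotoneOn Real.Gamma (Set.Ici (β + 1))) :
    ∀ z : ℝ, 0 ≤ z → z < 1 →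
      genMittagLeffler α β γ 1 z * genMittagLeffler α (β + 2) γ 1 z ≥
        (genMittagLeffler α (β + 1) γ 1 z) ^ 2 -
          1 / (Real.Gamma (β + 1) * Real.Gamma (β + 2) * (1 - z) ^ 2) := by
  intro z hz₀ hz₁
  rw [genMittagLeffler_one_eq_tsum_mul hα.le hβ, genMittagLeffler_one_add_one_eq,
    genMittagLeffler_one_add_two_eq hα.le hβ, show β + 2 = β + 1 + 1 by ring,
    Gamma_add_one (s := β + 1) (by positivity), ge_iff_le, sub_le_iff_le_add]
  set x : ℕ → ℝ := fun n => α * n + β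
  set u : ℕ → ℝ := fun n => mittagLefflerCoeff γ z n / Gamma (x n + 1)
  have hx (n : ℕ) : β ≤ x n := le_add_of_nonneg_left (by positivity)
  have hK : 0 < Gamma (β + 1) := Gamma_pos_of_pos (by positivity)
  have hu₀ (n : ℕ) : 0 ≤ u n :=
    div_nonneg (mittagLefflerCoeff_nonneg hγ₀ hz₀ n) (Gamma_pos_of_pos (by linarith [hx n])).le
  have hu (n : ℕ) : u n ≤ z ^ n / Gamma (β + 1) :=
    div_le_div₀ (by positivity) (mittagLefflerCoeff_le_pow hγ₀ hγ₁ hz₀ n) hK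
      (hΓ Set.self_mem_Ici (by simp [hx n]) (by linarith [hx n]))
  have hxu := summable_mul_of_le_geometric hz₀ hz₁ (fun n => hβ.le.trans (hx n))
    (fun n => le_refl (x n)) hu₀ hu
  convert turan_defect_of_le_geometric hβ hK hz₀ hz₁ hx hu₀ hu hxu using 3
  ring
end
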